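/- Let p > 1 and R : ℝ^N → [0,∞) be twice continuously differentiable. Define F(θ) = −∇R(θ)/‖∇R(θ)‖^{(p−2)/(p−1)} if ∇R(θ) ≠ 0 and F(θ) = 0 otherwise (the p-gradient flow field). Then F is continuous, and with V = R one has V̇(θ) = ∇R(θ)·F(θ) = −‖∇R(θ)‖^{p/(p−1)} ≤ 0, so Z = {θ : V̇(θ) = 0} equals the set of critical points of R. Consequently: if the sequence (θ_n) generated by the LCR algorithm with this F and V is bounded, then every accumulation point of (θ_n) is a critical point of R; and if the sequence generated by the LCM algorithm with this F and V is bounded, then it has at least one accumulation point which is a critical point of R. -/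

import Mathlib

/-!
With `q = (p - 2) / (p - 1) < 1` the field is `F = -(‖∇R‖ ^ q)⁻¹ • ∇R`; its norm is
`‖∇R‖ ^ (1 - q)`, so it is continuous also at critical points, and `V̇ = -‖∇R‖ ^ (2 - q)`.

The rest holds for Armijo backtracking with any continuous `F` and nonnegative `C¹` Lyapunov
function `V` with `V̇ ≤ 0`. The accepted Armijo tests telescope against `V ≥ 0`, so
`∑ ηₙ (-V̇(yₙ)) < ∞`. Along a subsequence converging to some `x` with `V̇(x) < 0` the steps then
tend to `0`, so eventually they were backtracked and the test failed at the previous trial step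
`f1 ηₙ`; by strict differentiability of `V` the failed tests give `λ V̇(x) ≥ V̇(x)`, impossible
for `λ < 1`. For LCM, if `V̇(yₙ)` does not come close to `0` infinitely often, then `∑ ηₙ < ∞`,
so `yₙ` converges and, since `ηₙ → 0`, infinitely many steps are backtracked: the same
contradiction.
-/

open Filter

/-- The Lyapunov derivative `V̇(y) = ⟪∇V(y), F(y)⟫`. -/
noncomputable def lyapDeriv {m : ℕ}
    (F : EuclideanSpace ℝ (Fin m) → EuclideanSpace ℝ (Fin m))
    (V : EuclideanSpace ℝ (Fin m) → ℝ) (y : EuclideanSpace ℝ (Fin m)) : ℝ :=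
  inner ℝ (gradient V y) (F y)

/-- `f(y,η) = V(y + η F(y)) − V(y) − λ η V̇(y)`. -/
noncomputable def armijoGap {m : ℕ}
    (F : EuclideanSpace ℝ (Fin m) → EuclideanSpace ℝ (Fin m))
    (V : EuclideanSpace ℝ (Fin m) → ℝ) (lam : ℝ)
    (y : EuclideanSpace ℝ (Fin m)) (η : ℝ) : ℝ :=
  V (y + η • F y) - V y - lam * η * lyapDeriv F V y

/-- The LCR algorithm. -/
def IsLCR {m : ℕ}
    (F : EuclideanSpace ℝ (Fin m) → EuclideanSpace ℝ (Fin m))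
    (V : EuclideanSpace ℝ (Fin m) → ℝ) (lam ηinit f1 : ℝ)
    (y : ℕ → EuclideanSpace ℝ (Fin m)) (η : ℕ → ℝ) : Prop :=
  ∀ n, y (n + 1) = y n + η n • F (y n) ∧
    ∃ p : ℕ, η n = ηinit / f1 ^ p ∧
      armijoGap F V lam (y n) (η n) ≤ 0 ∧
      ∀ k < p, ¬ armijoGap F V lam (y n) (ηinit / f1 ^ k) ≤ 0

/-- The LCM algorithm (convention `η_{-1} = η_init / f2`). -/
def IsLCM {m : ℕ}
    (F : EuclideanSpace ℝ (Fin m) → EuclideanSpace ℝ (Fin m))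
    (V : EuclideanSpace ℝ (Fin m) → ℝ) (lam ηinit f1 f2 : ℝ)
    (y : ℕ → EuclideanSpace ℝ (Fin m)) (η : ℕ → ℝ) : Prop :=
  ∀ n, y (n + 1) = y n + η n • F (y n) ∧
    ∃ p : ℕ, η n = (if n = 0 then ηinit else f2 * η (n - 1)) / f1 ^ p ∧
      armijoGap F V lam (y n) (η n) ≤ 0 ∧
      ∀ k < p, ¬ armijoGap F V lam (y n) ((if n = 0 then ηinit else f2 * η (n - 1)) / f1 ^ k) ≤ 0

open scoped RealInnerProductSpace Topology

section InnerProductSpace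

variable {E : Type*} [NormedAddCommGroup E] [InnerProductSpace ℝ E]

lemma norm_rpow_inv_smul (v : E) {q : ℝ} (hq : q ≠ 1) :
    ‖(‖v‖ ^ q)⁻¹ • v‖ = ‖v‖ ^ (1 - q) := by
  rcases eq_or_ne v 0 with rfl | hv
  · simp [Real.zero_rpow (sub_ne_zero.2 hq.symm)]
  rw [norm_smul, norm_inv, Real.norm_of_nonneg (by positivity),
    Real.rpow_sub (norm_pos_iff.2 hv), Real.rpow_one, inv_mul_eq_div]

lemma inner_self_rpow_inv_smul (v : E) {q : ℝ} (hq : q ≠ 2) :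
    ⟪v, (‖v‖ ^ q)⁻¹ • v⟫ = ‖v‖ ^ (2 - q) := by
  rcases eq_or_ne v 0 with rfl | hv
  · simp [Real.zero_rpow (sub_ne_zero.2 hq.symm)]
  rw [real_inner_smul_right, real_inner_self_eq_norm_sq,
    Real.rpow_sub (norm_pos_iff.2 hv), Real.rpow_two, inv_mul_eq_div]

lemma continuous_rpow_inv_smul {q : ℝ} (hq : q < 1) :
    Continuous fun v : E => (‖v‖ ^ q)⁻¹ • v := by
  refine continuous_iff_continuousAt.2 fun v => ?_
  rcases eq_or_ne v 0 with rfl | hv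
  · have h : Continuous fun v : E => ‖v‖ ^ (1 - q) :=
      continuous_norm.rpow_const fun _ => Or.inr (sub_nonneg.2 hq.le)
    have h0 := h.tendsto 0
    rw [norm_zero, Real.zero_rpow (sub_ne_zero.2 hq.ne')] at h0
    rw [ContinuousAt, smul_zero, tendsto_zero_iff_norm_tendsto_zero]
    simpa only [norm_rpow_inv_smul _ hq.ne] using h0
  · have hpos : 0 < ‖v‖ ^ q := Real.rpow_pos_of_pos (norm_pos_iff.2 hv) q
    exact ((continuous_norm.continuousAt.rpow_const (Or.inl (norm_ne_zero_iff.2 hv))).inv₀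
      hpos.ne').smul continuousAt_id

lemma continuous_gradient [CompleteSpace E] {V : E → ℝ} (hV : ContDiff ℝ 1 V) :
    Continuous (gradient V) :=
  (InnerProductSpace.toDual ℝ E).symm.continuous.comp (hV.continuous_fderiv one_ne_zero)

end InnerProductSpace

lemma exists_subseq_tendsto_of_mapClusterPt_comp {X Y : Type*} [PseudoMetricSpace X]
    [ProperSpace X] [TopologicalSpace Y] [T2Space Y] [FirstCountableTopology Y]
    {g : X → Y} (hg : Continuous g) {u : ℕ → X} (hu : Bornology.IsBounded (Set.range u))
    {a : Y} (ha : MapClusterPt a atTop (g ∘ u)) :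
    ∃ x, g x = a ∧ ∃ φ : ℕ → ℕ, StrictMono φ ∧ Tendsto (u ∘ φ) atTop (𝓝 x) := by
  obtain ⟨ψ, hψ, hgψ⟩ := ha.tendsto_subseq
  obtain ⟨x, -, φ, hφ, hx⟩ := tendsto_subseq_of_bounded hu fun n => Set.mem_range_self (ψ n)
  exact ⟨x, tendsto_nhds_unique ((hg.tendsto x).comp hx) (hgψ.comp hφ.tendsto_atTop),
    ψ ∘ φ, hψ.comp hφ, hx⟩

lemma frequently_lt_of_tendsto_zero {η : ℕ → ℝ} (hη : ∀ n, 0 < η n)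
    (h0 : Tendsto η atTop (𝓝 0)) : ∃ᶠ n in atTop, η (n + 1) < η n := by
  by_contra h
  obtain ⟨M, hM⟩ := eventually_atTop.1 (not_frequently.1 h)
  have hmono : ∀ n ≥ M, η M ≤ η n :=
    Nat.le_induction le_rfl fun n hn ih => ih.trans (not_lt.1 (hM n hn))
  linarith [hη M, ge_of_tendsto h0 (eventually_atTop.2 ⟨M, hmono⟩)]

lemma exists_tendsto_of_summable_steps {E : Type*} [NormedAddCommGroup E] [NormedSpace ℝ E]
    [ProperSpace E] {F : E → E} (hF : Continuous F) {y : ℕ → E} {η : ℕ → ℝ}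
    (hstep : ∀ n, y (n + 1) = y n + η n • F (y n)) (hη : ∀ n, 0 ≤ η n) (hsum : Summable η)
    (hy : Bornology.IsBounded (Set.range y)) : ∃ x, Tendsto y atTop (𝓝 x) := by
  obtain ⟨C, hC⟩ := hy.isCompact_closure.exists_bound_of_continuousOn hF.continuousOn
  refine cauchySeq_tendsto_of_complete (cauchySeq_of_dist_le_of_summable (fun n => η n * C)
    (fun n => ?_) (hsum.mul_right C))
  rw [Nat.succ_eq_add_one, hstep n, dist_self_add_right, norm_smul, Real.norm_of_nonneg (hη n)]
  exact mul_le_mul_of_nonneg_left (hC _ (subset_closure (Set.mem_range_self n))) (hη n)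

lemma tendsto_const_mul_nhdsGT_zero {ι : Type*} {l : Filter ι} {c : ℝ} (hc : 0 < c)
    {η : ι → ℝ} (hη : ∀ i, 0 < η i) (h0 : Tendsto η l (𝓝 0)) :
    Tendsto (fun i => c * η i) l (𝓝[>] 0) :=
  tendsto_nhdsWithin_iff.2 ⟨by simpa using h0.const_mul c, .of_forall fun i => mul_pos hc (hη i)⟩

lemma pos_of_backtrack {g : ℝ → ℝ} {f1 t η : ℝ} {p : ℕ} (hf1 : 0 < f1)
    (hη : η = t / f1 ^ p) (hmin : ∀ k < p, ¬ g (t / f1 ^ k) ≤ 0) (hlt : η < t) :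
    0 < g (f1 * η) := by
  obtain ⟨k, rfl⟩ : ∃ k, p = k + 1 :=
    Nat.exists_eq_succ_of_ne_zero (by rintro rfl; simp [hη] at hlt)
  have hprev : t / f1 ^ k = f1 * η := by
    rw [hη, pow_succ]
    field_simp
  simpa [hprev] using hmin k k.lt_succ_self

variable {m : ℕ} {F : EuclideanSpace ℝ (Fin m) → EuclideanSpace ℝ (Fin m)}
  {V : EuclideanSpace ℝ (Fin m) → ℝ} {lam : ℝ}

lemma lyapDeriv_eq_fderiv (y : EuclideanSpace ℝ (Fin m)) :
    lyapDeriv F V y = fderiv ℝ V y (F y) :=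
  inner_gradient_left

lemma continuous_lyapDeriv (hV : ContDiff ℝ 1 V) (hF : Continuous F) :
    Continuous (lyapDeriv F V) :=
  (continuous_gradient hV).inner hF

lemma tendsto_slope_lyapDeriv {ι : Type*} {l : Filter ι} {x : EuclideanSpace ℝ (Fin m)}
    (hV : ContDiffAt ℝ 1 V x) (hF : ContinuousAt F x) {z : ι → EuclideanSpace ℝ (Fin m)}
    {s : ι → ℝ} (hz : Tendsto z l (𝓝 x)) (hs : Tendsto s l (𝓝[≠] 0)) :
    Tendsto (fun i => (V (z i + s i • F (z i)) - V (z i)) / s i) l (𝓝 (lyapDeriv F V x)) := by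
  set f' := fderiv ℝ V x
  have hFz : Tendsto (fun i => F (z i)) l (𝓝 (F x)) := hF.tendsto.comp hz
  have hs0 : Tendsto s l (𝓝 0) := hs.mono_right nhdsWithin_le_nhds
  have hpair : Tendsto (fun i => (z i + s i • F (z i), z i)) l (𝓝 (x, x)) := by
    simpa using (hz.add (hs0.smul hFz)).prodMk_nhds hz
  -- strict differentiability makes the remainder `o(s ‖F z‖) = o(s)`
  have hrem : (fun i => V (z i + s i • F (z i)) - V (z i) - s i * f' (F (z i))) =o[l] s := by
    have ho : (fun i => V (z i + s i • F (z i)) - V (z i) - f' (s i • F (z i))) =o[l]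
        fun i => s i • F (z i) := by
      simpa [Function.comp_def] using
        (hV.hasStrictFDerivAt one_ne_zero).isLittleO.comp_tendsto hpair
    simpa using ho.trans_isBigO ((Asymptotics.isBigO_refl s l).smul (hFz.isBigO_one ℝ))
  have hlim := hrem.tendsto_div_nhds_zero.add ((f'.continuous.tendsto _).comp hFz)
  rw [zero_add, Function.comp_def, ← lyapDeriv_eq_fderiv] at hlim
  refine hlim.congr' ?_
  filter_upwards [hs self_mem_nhdsWithin] with i (hi : s i ≠ 0)
  field_simp
  ring

lemma lyapDeriv_nonneg_of_armijoGap_pos {ι : Type*} {l : Filter ι} [l.NeBot]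
    {x : EuclideanSpace ℝ (Fin m)} (hV : ContDiff ℝ 1 V) (hF : Continuous F) (hlam : lam < 1)
    {z : ι → EuclideanSpace ℝ (Fin m)} {s : ι → ℝ} (hz : Tendsto z l (𝓝 x))
    (hs : Tendsto s l (𝓝[>] 0)) (hgap : ∀ᶠ i in l, 0 < armijoGap F V lam (z i) (s i)) :
    0 ≤ lyapDeriv F V x := by
  have hslope := tendsto_slope_lyapDeriv hV.contDiffAt hF.continuousAt hz
    (hs.mono_right (nhdsWithin_mono _ fun _ ht => ne_of_gt ht))
  have hL := (((continuous_lyapDeriv hV hF).tendsto x).comp hz).const_mul lam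
  have hle : lam * lyapDeriv F V x ≤ lyapDeriv F V x := by
    refine le_of_tendsto_of_tendsto hL hslope ?_
    filter_upwards [hgap, hs self_mem_nhdsWithin] with i hi hsi
    rw [armijoGap] at hi
    rw [Function.comp_apply, le_div_iff₀ hsi]
    linarith
  nlinarith

lemma summable_mul_lyapDeriv {y : ℕ → EuclideanSpace ℝ (Fin m)} {η : ℕ → ℝ}
    (hV0 : ∀ x, 0 ≤ V x) (hlam : 0 < lam) (hL : ∀ x, lyapDeriv F V x ≤ 0) (hη : ∀ n, 0 ≤ η n)
    (hstep : ∀ n, y (n + 1) = y n + η n • F (y n))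
    (hgap : ∀ n, armijoGap F V lam (y n) (η n) ≤ 0) :
    Summable fun n => η n * lyapDeriv F V (y n) := by
  have hdesc : ∀ n, lam * (η n * -lyapDeriv F V (y n)) ≤ V (y n) - V (y (n + 1)) := by
    intro n
    have h := hgap n
    rw [armijoGap, ← hstep] at h
    linarith
  have hsum : Summable fun n => lam * (η n * -lyapDeriv F V (y n)) := by
    refine summable_of_sum_range_le (c := V (y 0))
      (fun n => mul_nonneg hlam.le (mul_nonneg (hη n) (neg_nonneg.2 (hL _)))) fun n => ?_
    calc ∑ k ∈ Finset.range n, lam * (η k * -lyapDeriv F V (y k))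
        ≤ ∑ k ∈ Finset.range n, (V (y k) - V (y (k + 1))) := Finset.sum_le_sum fun k _ => hdesc k
      _ = V (y 0) - V (y n) := Finset.sum_range_sub' (fun k => V (y k)) n
      _ ≤ V (y 0) := by linarith [hV0 (y n)]
  refine (hsum.mul_left (-lam⁻¹)).congr fun n => ?_
  field_simp

namespace IsLCR

variable {ηinit f1 : ℝ} {y : ℕ → EuclideanSpace ℝ (Fin m)} {η : ℕ → ℝ}

lemma step_pos (h : IsLCR F V lam ηinit f1 y η) (hηinit : 0 < ηinit) (hf1 : 0 < f1) (n : ℕ) :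
    0 < η n := by
  obtain ⟨p, hp, -⟩ := (h n).2
  exact hp ▸ div_pos hηinit (pow_pos hf1 p)

lemma armijoGap_nonpos (h : IsLCR F V lam ηinit f1 y η) (n : ℕ) :
    armijoGap F V lam (y n) (η n) ≤ 0 := by
  obtain ⟨p, -, hgap, -⟩ := (h n).2
  exact hgap

lemma armijoGap_pos_of_lt (h : IsLCR F V lam ηinit f1 y η) (hf1 : 0 < f1) {n : ℕ}
    (hn : η n < ηinit) : 0 < armijoGap F V lam (y n) (f1 * η n) := by
  obtain ⟨p, hp, -, hmin⟩ := (h n).2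
  exact pos_of_backtrack hf1 hp hmin hn

theorem lyapDeriv_eq_zero_of_tendsto (h : IsLCR F V lam ηinit f1 y η) (hV0 : ∀ x, 0 ≤ V x)
    (hV : ContDiff ℝ 1 V) (hF : Continuous F) (hL : ∀ x, lyapDeriv F V x ≤ 0)
    (hlam : lam ∈ Set.Ioo 0 1) (hηinit : 0 < ηinit) (hf1 : 0 < f1) {φ : ℕ → ℕ}
    (hφ : StrictMono φ) {x : EuclideanSpace ℝ (Fin m)} (hx : Tendsto (y ∘ φ) atTop (𝓝 x)) :
    lyapDeriv F V x = 0 := by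
  have hη := h.step_pos hηinit hf1
  refine le_antisymm (hL x) (not_lt.1 fun hLx => ?_)
  have hLy : Tendsto (fun n => lyapDeriv F V (y (φ n))) atTop (𝓝 (lyapDeriv F V x)) :=
    ((continuous_lyapDeriv hV hF).tendsto x).comp hx
  have hprod : Tendsto (fun n => η (φ n) * lyapDeriv F V (y (φ n))) atTop (𝓝 0) :=
    (summable_mul_lyapDeriv hV0 hlam.1 hL (fun n => (hη n).le) (fun n => (h n).1)
      h.armijoGap_nonpos).tendsto_atTop_zero.comp hφ.tendsto_atTop
  have hη0 : Tendsto (fun n => η (φ n)) atTop (𝓝 0) := by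
    refine (zero_div (lyapDeriv F V x) ▸ hprod.div hLy hLx.ne).congr' ?_
    filter_upwards [hLy.eventually_ne hLx.ne] with n hn
    exact mul_div_cancel_right₀ _ hn
  refine (lyapDeriv_nonneg_of_armijoGap_pos hV hF hlam.2 hx
    (tendsto_const_mul_nhdsGT_zero hf1 (fun n => hη _) hη0) ?_).not_gt hLx
  filter_upwards [hη0.eventually (gt_mem_nhds hηinit)] with n hn
  exact h.armijoGap_pos_of_lt hf1 hn

end IsLCR

namespace IsLCM

variable {ηinit f1 f2 : ℝ} {y : ℕ → EuclideanSpace ℝ (Fin m)} {η : ℕ → ℝ}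

lemma step_pos (h : IsLCM F V lam ηinit f1 f2 y η) (hηinit : 0 < ηinit) (hf1 : 0 < f1)
    (hf2 : 0 < f2) : ∀ n, 0 < η n
  | 0 => by
    obtain ⟨p, hp, -⟩ := (h 0).2
    rw [hp, if_pos rfl]
    exact div_pos hηinit (pow_pos hf1 p)
  | n + 1 => by
    obtain ⟨p, hp, -⟩ := (h (n + 1)).2
    rw [hp, if_neg n.succ_ne_zero, Nat.add_sub_cancel]
    exact div_pos (mul_pos hf2 (step_pos h hηinit hf1 hf2 n)) (pow_pos hf1 p)

lemma armijoGap_nonpos (h : IsLCM F V lam ηinit f1 f2 y η) (n : ℕ) :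
    armijoGap F V lam (y n) (η n) ≤ 0 := by
  obtain ⟨p, -, hgap, -⟩ := (h n).2
  exact hgap

lemma armijoGap_pos_of_lt (h : IsLCM F V lam ηinit f1 f2 y η) (hf1 : 0 < f1) {n : ℕ}
    (hn : η (n + 1) < f2 * η n) : 0 < armijoGap F V lam (y (n + 1)) (f1 * η (n + 1)) := by
  obtain ⟨p, hp, -, hmin⟩ := (h (n + 1)).2
  simp only [n.succ_ne_zero, if_false, Nat.add_sub_cancel] at hp hmin
  exact pos_of_backtrack hf1 hp hmin hn

theorem exists_lyapDeriv_eq_zero (h : IsLCM F V lam ηinit f1 f2 y η) (hV0 : ∀ x, 0 ≤ V x)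
    (hV : ContDiff ℝ 1 V) (hF : Continuous F) (hL : ∀ x, lyapDeriv F V x ≤ 0)
    (hlam : lam ∈ Set.Ioo 0 1) (hηinit : 0 < ηinit) (hf1 : 0 < f1) (hf2 : 1 ≤ f2)
    (hy : Bornology.IsBounded (Set.range y)) :
    ∃ x, lyapDeriv F V x = 0 ∧ ∃ φ : ℕ → ℕ, StrictMono φ ∧ Tendsto (y ∘ φ) atTop (𝓝 x) := by
  have hLc := continuous_lyapDeriv hV hF
  by_cases hc : MapClusterPt 0 atTop (lyapDeriv F V ∘ y)
  · exact exists_subseq_tendsto_of_mapClusterPt_comp hLc hy hc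
  exfalso
  obtain ⟨δ, hδ, hev⟩ : ∃ δ > 0, ∀ᶠ n in atTop, lyapDeriv F V (y n) ≤ -δ := by
    simp only [mapClusterPt_iff_frequently, not_forall, not_frequently] at hc
    obtain ⟨s, hs, hev⟩ := hc
    obtain ⟨δ, hδ, hball⟩ := Metric.mem_nhds_iff.1 hs
    refine ⟨δ, hδ, hev.mono fun n hn => ?_⟩
    have hfar : ¬ |lyapDeriv F V (y n)| < δ := fun hlt =>
      hn (hball (by simpa [Real.dist_eq] using hlt))
    linarith [abs_of_nonpos (hL (y n))]
  have hη := h.step_pos hηinit hf1 (by linarith)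
  have hsum : Summable η := by
    refine summable_of_isBigO_nat ((summable_mul_lyapDeriv hV0 hlam.1 hL (fun n => (hη n).le)
      (fun n => (h n).1) h.armijoGap_nonpos).neg.div_const δ) (.of_bound 1 ?_)
    filter_upwards [hev] with n hn
    have hpos : 0 ≤ -(η n * lyapDeriv F V (y n)) / δ := div_nonneg (by nlinarith [hη n]) hδ.le
    rw [one_mul, Real.norm_of_nonneg (hη n).le, Real.norm_of_nonneg hpos, le_div_iff₀ hδ]
    nlinarith [hη n]
  obtain ⟨x, hx⟩ := exists_tendsto_of_summable_steps hF (fun n => (h n).1) (fun n => (hη n).le)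
    hsum hy
  have hLx : lyapDeriv F V x ≤ -δ := le_of_tendsto ((hLc.tendsto x).comp hx) hev
  obtain ⟨ψ, hψ, hdec⟩ :=
    extraction_of_frequently_atTop (frequently_lt_of_tendsto_zero hη hsum.tendsto_atTop_zero)
  have hshift : Tendsto (fun n => ψ n + 1) atTop atTop :=
    (tendsto_add_atTop_nat 1).comp hψ.tendsto_atTop
  have := lyapDeriv_nonneg_of_armijoGap_pos hV hF hlam.2 (hx.comp hshift)
    (tendsto_const_mul_nhdsGT_zero hf1 (fun n => hη _) (hsum.tendsto_atTop_zero.comp hshift))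
    (Eventually.of_forall fun n =>
      h.armijoGap_pos_of_lt hf1 ((hdec n).trans_le (le_mul_of_one_le_left (hη _).le hf2)))
  linarith

end IsLCM

/-- **pGD with Lyapunov backtracking.** The `p`-gradient flow field
`F(θ) = −∇R(θ)/‖∇R(θ)‖^{(p−2)/(p−1)}` (and `F(θ) = 0` at critical points) is continuous,
its Lyapunov derivative with `V = R` is `V̇(θ) = −‖∇R(θ)‖^{p/(p−1)} ≤ 0`, so `Z` is exactly
the set of critical points of `R`; consequently every accumulation point of a bounded LCR
sequence is a critical point of `R`, and a bounded LCM sequence has at least one accumulation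
point which is a critical point of `R`. -/
theorem pGD_lyapunov_backtracking
    {N : ℕ} (p : ℝ) (hp : 1 < p)
    (R : EuclideanSpace ℝ (Fin N) → ℝ) (hR0 : ∀ θ, 0 ≤ R θ) (hR : ContDiff ℝ 2 R)
    (F : EuclideanSpace ℝ (Fin N) → EuclideanSpace ℝ (Fin N))
    (hF0 : ∀ θ, gradient R θ = 0 → F θ = 0)
    (hFdef : ∀ θ, gradient R θ ≠ 0 →
      F θ = -(‖gradient R θ‖ ^ ((p - 2) / (p - 1)))⁻¹ • gradient R θ)
    (lam ηinit f1 f2 : ℝ)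
    (hlam : lam ∈ Set.Ioo (0 : ℝ) 1) (hηinit : 0 < ηinit) (hf1 : 1 < f1) (hf2 : 1 < f2) :
    Continuous F ∧
    (∀ θ, lyapDeriv F R θ = -(‖gradient R θ‖ ^ (p / (p - 1)))) ∧
    (∀ θ, lyapDeriv F R θ ≤ 0) ∧
    ({θ | lyapDeriv F R θ = 0} = {θ | gradient R θ = 0}) ∧
    (∀ (θ : ℕ → EuclideanSpace ℝ (Fin N)) (η : ℕ → ℝ),
      IsLCR F R lam ηinit f1 θ η → Bornology.IsBounded (Set.range θ) →
      ∀ θstar, (∃ φ : ℕ → ℕ, StrictMono φ ∧ Tendsto (θ ∘ φ) atTop (nhds θstar)) →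
        gradient R θstar = 0) ∧
    (∀ (θ : ℕ → EuclideanSpace ℝ (Fin N)) (η : ℕ → ℝ),
      IsLCM F R lam ηinit f1 f2 θ η → Bornology.IsBounded (Set.range θ) →
      ∃ θstar, gradient R θstar = 0 ∧
        ∃ φ : ℕ → ℕ, StrictMono φ ∧ Tendsto (θ ∘ φ) atTop (nhds θstar)) := by
  set q := (p - 2) / (p - 1) with hq_def
  have hq : q < 1 := by rw [hq_def, div_lt_one (by linarith)]; linarith
  have hq2 : 2 - q = p / (p - 1) := by
    rw [hq_def, eq_div_iff (by linarith), sub_mul, div_mul_cancel₀ _ (by linarith)]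
    ring
  have hFeq : F = fun θ => -((‖gradient R θ‖ ^ q)⁻¹ • gradient R θ) := by
    funext θ
    by_cases hg : gradient R θ = 0
    · simp [hF0 θ hg, hg]
    · rw [hFdef θ hg, neg_smul]
  have hFc : Continuous F :=
    hFeq ▸ ((continuous_rpow_inv_smul hq).comp (continuous_gradient (hR.of_le (by norm_num)))).neg
  have hform : ∀ θ, lyapDeriv F R θ = -(‖gradient R θ‖ ^ (p / (p - 1))) := fun θ => by
    rw [lyapDeriv, hFeq, inner_neg_right, inner_self_rpow_inv_smul _ (by linarith), hq2]
  have hL : ∀ θ, lyapDeriv F R θ ≤ 0 := fun θ =>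
    hform θ ▸ neg_nonpos.2 (Real.rpow_nonneg (norm_nonneg _) _)
  have hZ : ∀ θ, lyapDeriv F R θ = 0 ↔ gradient R θ = 0 := fun θ => by
    rw [hform θ, neg_eq_zero, Real.rpow_eq_zero (norm_nonneg _) (div_pos (by linarith) (by linarith)).ne', norm_eq_zero]
  have hR1 : ContDiff ℝ 1 R := hR.of_le (by norm_num)
  refine ⟨hFc, hform, hL, Set.ext hZ, ?_, ?_⟩
  · rintro θ η hθ - θstar ⟨φ, hφ, hlim⟩
    exact (hZ θstar).1 (hθ.lyapDeriv_eq_zero_of_tendsto hR0 hR1 hFc hL hlam hηinit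
      (by linarith) hφ hlim)
  · intro θ η hθ hbdd
    obtain ⟨θstar, hθstar, hacc⟩ := hθ.exists_lyapDeriv_eq_zero hR0 hR1 hFc hL hlam hηinit
      (by linarith) hf2.le hbdd
    exact ⟨θstar, (hZ θstar).1 hθstar, hacc⟩
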